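/- The Hessian of F(c₁,…,c_M) = Σ_{m=1}^M c_m f(A + B Σ_i c_i + θ c_m) restricted to the hyperplane Σ c_i = x̄ (so that Σ_i c_i is fixed) is diagonal negative definite; i.e., F(c | Σc_i = x̄) = Σ_m c_m f(K + θ c_m) with K = A + B x̄ > 0 is strictly concave on the simplex slice {c : Σc_i = x̄, 0 ≤ c_m ≤ λ_m}. -/

import Mathlib

open Real

noncomputable def f (t : ℝ) : ℝ := (1 - Real.exp (-t)) / t

/- On the slice, `F` is a sum of functions `c ↦ c * f (K + θ * c)` of separate coordinates, so
it suffices that each is strictly concave where `K + θ * c > 0`. With `t = K + θ * c` it equals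
`((1 - exp (-t)) - K * f t) / θ`: a strictly concave function of `t` minus `K / θ` times the
convex function `f t = ∫₀¹ exp (-t s) ds`. -/

open Set

theorem StrictConcaveOn.comp_affineMap {𝕜 E F β : Type*} [Ring 𝕜] [PartialOrder 𝕜]
    [AddCommGroup E] [AddCommGroup F] [Module 𝕜 E] [Module 𝕜 F]
    [AddCommMonoid β] [PartialOrder β] [SMul 𝕜 β] {s : Set F} {f : F → β}
    {g : E →ᵃ[𝕜] F} (hg : Function.Injective g) (hf : StrictConcaveOn 𝕜 s f) :
    StrictConcaveOn 𝕜 (g ⁻¹' s) (f ∘ g) :=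
  ⟨hf.1.affine_preimage g, fun _ hx _ hy hxy _ _ ha hb hab => by
    simpa only [Function.comp, Convex.combo_affine_apply hab] using
      hf.2 hx hy (hg.ne hxy) ha hb hab⟩

theorem StrictConcaveOn.const_mul {s : Set ℝ} {g : ℝ → ℝ} {c : ℝ} (hc : 0 < c)
    (hg : StrictConcaveOn ℝ s g) : StrictConcaveOn ℝ s (fun x => c * g x) :=
  ⟨hg.1, fun _ hx _ hy hxy _ _ ha hb hab => by
    have := mul_lt_mul_of_pos_left (hg.2 hx hy hxy ha hb hab) hc
    simp only [smul_eq_mul] at this ⊢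
    linarith⟩

theorem StrictConcaveOn.sum_pi {ι 𝕜 β : Type*} {E : ι → Type*} [Fintype ι]
    [Semiring 𝕜] [PartialOrder 𝕜] [∀ i, AddCommMonoid (E i)] [∀ i, Module 𝕜 (E i)]
    [AddCommMonoid β] [PartialOrder β] [IsOrderedCancelAddMonoid β] [Module 𝕜 β]
    {s : ∀ i, Set (E i)} {g : ∀ i, E i → β} (hg : ∀ i, StrictConcaveOn 𝕜 (s i) (g i)) :
    StrictConcaveOn 𝕜 (univ.pi s) (fun x => ∑ i, g i (x i)) := by
  refine ⟨convex_pi fun i _ => (hg i).1, fun x hx y hy hxy a b ha hb hab => ?_⟩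
  obtain ⟨i₀, hi₀⟩ := Function.ne_iff.mp hxy
  simp only [Finset.smul_sum, ← Finset.sum_add_distrib, Pi.add_apply, Pi.smul_apply]
  refine Finset.sum_lt_sum (fun i _ => ?_) ⟨i₀, Finset.mem_univ _, ?_⟩
  · exact (hg i).concaveOn.2 (hx i trivial) (hy i trivial) ha.le hb.le hab
  · exact (hg i₀).2 (hx i₀ trivial) (hy i₀ trivial) hi₀ ha hb hab

theorem f_eq_integral {t : ℝ} (ht : t ≠ 0) : f t = ∫ s in (0 : ℝ)..1, exp (-t * s) := by
  rw [intervalIntegral.integral_comp_mul_left (fun x => exp x) (neg_ne_zero.2 ht),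
    mul_zero, mul_one, integral_exp, smul_eq_mul, exp_zero, f]
  field_simp
  ring

theorem convexOn_f : ConvexOn ℝ (Ioi 0) f := by
  refine ⟨convex_Ioi 0, fun u hu v hv a b ha hb hab => ?_⟩
  have huv : a • u + b • v ∈ Ioi (0 : ℝ) := convex_Ioi 0 hu hv ha hb hab
  have hint (t : ℝ) : IntervalIntegrable (fun s => exp (-t * s)) MeasureTheory.volume 0 1 :=
    (by fun_prop : Continuous fun s => exp (-t * s)).intervalIntegrable 0 1
  simp only [smul_eq_mul] at huv ⊢
  rw [f_eq_integral hu.ne', f_eq_integral hv.ne', f_eq_integral huv.ne',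
    ← intervalIntegral.integral_const_mul, ← intervalIntegral.integral_const_mul,
    ← intervalIntegral.integral_add ((hint u).const_mul a) ((hint v).const_mul b)]
  refine intervalIntegral.integral_mono_on zero_le_one (hint _)
    (((hint u).const_mul a).add ((hint v).const_mul b)) fun s _ => ?_
  rw [show -(a * u + b * v) * s = a • (-u * s) + b • (-v * s) by simp only [smul_eq_mul]; ring]
  exact convexOn_exp.2 (mem_univ _) (mem_univ _) ha hb hab

theorem strictConcaveOn_one_sub_exp_neg : StrictConcaveOn ℝ univ (fun t => 1 - exp (-t)) := by
  refine ((strictConvexOn_exp.neg.comp_affineMap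
    (g := (-LinearMap.id : ℝ →ₗ[ℝ] ℝ).toAffineMap) neg_injective).add_const 1).congr
    fun t _ => ?_
  simp [sub_eq_neg_add]

theorem strictConcaveOn_one_sub_exp_neg_sub_mul_f {K : ℝ} (hK : 0 ≤ K) :
    StrictConcaveOn ℝ (Ioi 0) (fun t => 1 - exp (-t) - K * f t) := by
  refine ((strictConcaveOn_one_sub_exp_neg.subset (subset_univ _) (convex_Ioi 0)).add_concaveOn
    (convexOn_f.smul hK).neg).congr fun t _ => ?_
  simp [sub_eq_add_neg]

theorem strictConcaveOn_mul_f_const_add_mul {K θ : ℝ} (hK : 0 ≤ K) (hθ : 0 < θ) :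
    StrictConcaveOn ℝ {c | 0 < K + θ * c} (fun c => c * f (K + θ * c)) := by
  let φ : ℝ →ᵃ[ℝ] ℝ := ⟨fun c => K + θ * c, θ • LinearMap.id, fun c v => by
    simp only [vadd_eq_add, LinearMap.smul_apply, LinearMap.id_coe, id_eq, smul_eq_mul]; ring⟩
  have hφ : Function.Injective φ := fun c d h => mul_left_cancel₀ hθ.ne' (add_left_cancel h)
  refine (((strictConcaveOn_one_sub_exp_neg_sub_mul_f hK).comp_affineMap hφ).const_mul
    (inv_pos.2 hθ)).congr fun c (hc : 0 < K + θ * c) => ?_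
  simp only [Function.comp, φ, AffineMap.coe_mk, f]
  field_simp
  ring

theorem stmt_13 (M : ℕ) (A B θ xbar K : ℝ) (lam : Fin M → ℝ)
    (hA : 0 < A) (hB : 0 < B) (hθ : 0 < θ) (hx : 0 ≤ xbar)
    (hK : K = A + B * xbar) :
    StrictConcaveOn ℝ
      {c : Fin M → ℝ | (∑ i, c i = xbar) ∧ ∀ m, 0 ≤ c m ∧ c m ≤ lam m}
      (fun c : Fin M → ℝ => ∑ m, c m * f (K + θ * c m)) := by
  have hKpos : 0 < K := hK ▸ by positivity
  have hconvex : Convex ℝ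
      {c : Fin M → ℝ | (∑ i, c i = xbar) ∧ ∀ m, 0 ≤ c m ∧ c m ≤ lam m} := by
    have hsum : IsLinearMap ℝ fun c : Fin M → ℝ => ∑ i, c i :=
      ⟨fun _ _ => Finset.sum_add_distrib, fun r c => by simp [Finset.mul_sum]⟩
    have hbox : {c : Fin M → ℝ | ∀ m, 0 ≤ c m ∧ c m ≤ lam m} = Icc 0 lam := by
      ext c
      simp [Pi.le_def, forall_and]
    rw [ofPred_and, hbox]
    exact (convex_hyperplane hsum xbar).inter (convex_Icc 0 lam)
  refine (StrictConcaveOn.sum_pi fun _ => strictConcaveOn_mul_f_const_add_mul hKpos.le hθ).subset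
    (fun c hc m _ => ?_) hconvex
  exact add_pos_of_pos_of_nonneg hKpos (mul_nonneg hθ.le (hc.2 m).1)
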